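/- arXiv:1704.06478 — 2 statements merged into one kernel-verified Lean document; each statement's English description precedes it below -/
import Mathlib

section
/- The duality relation for multiple zeta values: for a word w in letters e_0, e_1 starting with e_1 and ending with e_0, the iterated integral L(w) = I(0;w;1) satisfies L(w) = L(τ(w)), where τ is the anti-automorphism of the free algebra on e_0,e_1 with τ(e_0) = −e_1 and τ(e_1) = −e_0 (so L(w − τ(w)) = 0). -/
/-!
The substitution `tᵢ ↦ 1 - t_{m+1-i}` is a measure-preserving involution of the open simplex
`0 < t₁ < ⋯ < t_m < 1`. It turns the factor `1/(tᵢ - aᵢ)` into `-1/(t_{m+1-i} - (1 - aᵢ))`, so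
the integral picks up the sign `(-1)^m` and the word is reversed with every `aᵢ` replaced by
`1 - aᵢ`; on the letters `0, 1` this is exactly the exchange `e₀ ↔ e₁`.
-/

open scoped BigOperators
open MeasureTheory Filter

noncomputable section

/-- Iterated integral over the open simplex `0 < t₁ < ⋯ < t_m < 1` of `∏ᵢ 1/(tᵢ - aᵢ)`. -/
def itInt (a : List ℂ) : ℂ :=
  ∫ t in {t : Fin a.length → ℝ | StrictMono t ∧ ∀ i, t i ∈ Set.Ioo (0:ℝ) 1},
    ∏ i : Fin a.length, ((t i : ℂ) - a.get i)⁻¹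

/-- Multiple zeta value attached to a list of exponents. -/
def mzv (k : List ℕ) : ℝ :=
  ∑' f : {f : Fin k.length → ℕ+ // StrictMono f},
    ∏ i : Fin k.length, (((f.1 i : ℕ) : ℝ) ^ (k.get i))⁻¹

/-- Letters: `0 ↦ e₀`, `1 ↦ e₁`, `2 ↦ e_z`. -/
abbrev Ltr := Fin 3

/-- The free noncommutative algebra `ℚ⟨e₀,e₁,e_z⟩` realized as a monoid algebra. -/
abbrev Alg := MonoidAlgebra ℚ (FreeMonoid Ltr)

/-- The word (monomial) corresponding to a list of letters. -/
def wd (l : List Ltr) : Alg := MonoidAlgebra.of ℚ (FreeMonoid Ltr) (FreeMonoid.ofList l)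

/-- Padded letter sequence: `a₀ = 0`, `a_{n+1} = 1`. -/
def pad (l : List Ltr) : ℕ → Ltr := fun i => (((0:Ltr) :: (l ++ [1])).getD i 0)

/-- Unordered-pair Kronecker delta. -/
def dl (a b c d : Ltr) : ℚ := if (a = c ∧ b = d) ∨ (a = d ∧ b = c) then 1 else 0

/-- `∂_{z,b}` on a single word. -/
def delWord (b : Ltr) (l : List Ltr) : Alg :=
  ∑ i ∈ Finset.range l.length,
    (dl (pad l (i+1)) (pad l (i+2)) 2 b - dl (pad l i) (pad l (i+1)) 2 b) •
      wd (l.eraseIdx i)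

/-- The linear operator `∂_{z,b}` on `ℚ⟨e₀,e₁,e_z⟩`. -/
def del (b : Ltr) : Alg →ₗ[ℚ] Alg :=
  Finsupp.lift Alg ℚ (FreeMonoid Ltr) (fun l => delWord b (FreeMonoid.toList l))
    ∘ₗ (MonoidAlgebra.coeffLinearEquiv ℚ).toLinearMap

/-- Evaluation of letters at a point `z`. -/
def ev (z : ℂ) : Ltr → ℂ := fun i => if i = 0 then 0 else if i = 1 then 1 else z

/-- The linear map `L` (depending on `z`) given by iterated integrals. -/
def LL (z : ℂ) : Alg →ₗ[ℚ] ℂ :=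
  Finsupp.lift ℂ ℚ (FreeMonoid Ltr) (fun l => itInt ((FreeMonoid.toList l).map (ev z)))
    ∘ₗ (MonoidAlgebra.coeffLinearEquiv ℚ).toLinearMap

/-- `A_n = (e₁e₀)^n`. -/
def Aw : ℕ → List Ltr
  | 0 => []
  | n+1 => 1 :: 0 :: Aw n

/-- `B_n = (e₁e₀)^n e₁`. -/
def Bw (n : ℕ) : List Ltr := Aw n ++ [1]

/-- `Ā_n = (e₀e₁)^n`. -/
def Abar : ℕ → List Ltr
  | 0 => []
  | n+1 => 0 :: 1 :: Abar n

/-- `B̄_n = (e₀e₁)^n e₀`. -/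
def Bbar (n : ℕ) : List Ltr := Abar n ++ [0]

/-- The single letter `e_z`. -/
def ezw : List Ltr := [2]

/-- Flip `e₀ ↔ e₁` (fixing `e_z`, which never occurs in duality words). -/
def flipL : Ltr → Ltr := fun i => if i = 0 then 1 else if i = 1 then 0 else 2

/-- The duality anti-automorphism `τ` as a linear map. -/
def tau : Alg →ₗ[ℚ] Alg :=
  Finsupp.lift Alg ℚ (FreeMonoid Ltr)
    (fun l => ((-1 : ℚ) ^ (FreeMonoid.toList l).length) •
      wd (((FreeMonoid.toList l).reverse).map flipL))
    ∘ₗ (MonoidAlgebra.coeffLinearEquiv ℚ).toLinearMap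

/-- `Δ(w) = w - τ(w)`. -/
def Del (x : Alg) : Alg := x - tau x

/-- The segment `[0,1] ⊂ ℂ`. -/
def seg : Set ℂ := (fun t : ℝ => (t : ℂ)) '' Set.Icc 0 1

/-- Admissibility of a word: it is empty, or starts with `e₁` or `e_z`
and ends with `e₀` or `e_z`. -/
def adm (l : List Ltr) : Prop :=
  ∀ h : l ≠ [], (l.head h = 1 ∨ l.head h = 2) ∧ (l.getLast h = 0 ∨ l.getLast h = 2)

/-- The subspace `𝒜¹` spanned by admissible words. -/
def A1 : Submodule ℚ Alg := Submodule.span ℚ {x | ∃ l, adm l ∧ x = wd l}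

/-- The span of words containing the letter `e_z` (the ideal `ℐ = 𝒜e_z𝒜`). -/
def Iz : Submodule ℚ Alg := Submodule.span ℚ {x | ∃ l : List Ltr, (2:Ltr) ∈ l ∧ x = wd l}

/-- `F_{ee}(m,n)`. -/
def Fee (s : ℕ) (m n : ℤ) : Alg :=
  if m < 0 ∨ n < 0 then 0 else
  wd (Aw s ++ Bbar m.toNat ++ ezw ++ Aw n.toNat)
    + wd (Aw m.toNat ++ ezw ++ Aw s ++ ezw ++ Aw n.toNat)
    + wd (Aw m.toNat ++ ezw ++ Abar s ++ ezw ++ Aw n.toNat)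
    + wd (Aw m.toNat ++ ezw ++ Bw n.toNat ++ Aw s)
    - wd (Bw (s + m.toNat) ++ ezw ++ Aw n.toNat)
    - wd (Aw m.toNat ++ ezw ++ Bbar (s + n.toNat))

/-- `F_{oe}(m,n)`. -/
def Foe (s : ℕ) (m n : ℤ) : Alg :=
  if m < 0 ∨ n < 0 then 0 else
  wd (Aw s ++ Abar (m.toNat + 1) ++ ezw ++ Aw n.toNat)
    + wd (Bw m.toNat ++ ezw ++ Aw s ++ ezw ++ Aw n.toNat)
    + wd (Bw m.toNat ++ ezw ++ Abar s ++ ezw ++ Aw n.toNat)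
    + wd (Bw m.toNat ++ ezw ++ Bw n.toNat ++ Aw s)
    - wd (Aw (s + m.toNat + 1) ++ ezw ++ Aw n.toNat)
    - wd (Bw m.toNat ++ ezw ++ Bbar (s + n.toNat))

/-- `F_{eo}(m,n)`. -/
def Feo (s : ℕ) (m n : ℤ) : Alg :=
  if m < 0 ∨ n < 0 then 0 else
  wd (Aw s ++ Bbar m.toNat ++ ezw ++ Bbar n.toNat)
    + wd (Aw m.toNat ++ ezw ++ Aw s ++ ezw ++ Bbar n.toNat)
    + wd (Aw m.toNat ++ ezw ++ Abar s ++ ezw ++ Bbar n.toNat)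
    + wd (Aw m.toNat ++ ezw ++ Abar (n.toNat + 1) ++ Aw s)
    - wd (Bw (s + m.toNat) ++ ezw ++ Bbar n.toNat)
    - wd (Aw m.toNat ++ ezw ++ Aw (s + n.toNat + 1))

/-- `F_{oo}(m,n)`. -/
def Foo (s : ℕ) (m n : ℤ) : Alg :=
  if m < 0 ∨ n < 0 then 0 else
  wd (Aw s ++ Abar (m.toNat + 1) ++ ezw ++ Bbar n.toNat)
    + wd (Bw m.toNat ++ ezw ++ Aw s ++ ezw ++ Bbar n.toNat)
    + wd (Bw m.toNat ++ ezw ++ Abar s ++ ezw ++ Bbar n.toNat)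
    + wd (Bw m.toNat ++ ezw ++ Abar (n.toNat + 1) ++ Aw s)
    - wd (Aw (s + m.toNat + 1) ++ ezw ++ Bbar n.toNat)
    - wd (Bw m.toNat ++ ezw ++ Aw (s + n.toNat + 1))

/-- Evaluation of a two-letter alphabet: `0 ↦ 0`, `1 ↦ 1`. -/
def ev2 : Fin 2 → ℂ := fun i => if i = 0 then 0 else 1

/-- Flip `e₀ ↔ e₁`. -/
def flip2 : Fin 2 → Fin 2 := fun i => if i = 0 then 1 else 0

def openSimplex (n : ℕ) : Set (Fin n → ℝ) :=
  {t | StrictMono t ∧ ∀ i, t i ∈ Set.Ioo (0:ℝ) 1}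

def simplexReflection (n : ℕ) : (Fin n → ℝ) ≃ᵐ (Fin n → ℝ) :=
  MeasurableEquiv.arrowCongr' Fin.revPerm (MeasurableEquiv.subLeft 1)

@[simp]
lemma simplexReflection_apply {n : ℕ} (t : Fin n → ℝ) (i : Fin n) :
    simplexReflection n t i = 1 - t i.rev :=
  rfl

lemma simplexReflection_involutive (n : ℕ) : Function.Involutive (simplexReflection n) := by
  intro t
  funext i
  simp

lemma measurePreserving_simplexReflection (n : ℕ) :
    MeasurePreserving (simplexReflection n) :=
  volume_preserving_arrowCongr' _ _ (Measure.measurePreserving_sub_left volume 1)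

lemma simplexReflection_mem_openSimplex {n : ℕ} {t : Fin n → ℝ} (ht : t ∈ openSimplex n) :
    simplexReflection n t ∈ openSimplex n := by
  refine ⟨fun i j hij => ?_, fun i => ?_⟩
  · simpa using ht.1 (Fin.rev_lt_rev.mpr hij)
  · obtain ⟨h0, h1⟩ := ht.2 i.rev
    simp only [simplexReflection_apply, Set.mem_Ioo]
    constructor <;> linarith

lemma preimage_simplexReflection_openSimplex (n : ℕ) :
    simplexReflection n ⁻¹' openSimplex n = openSimplex n := by
  refine Set.Subset.antisymm (fun t ht => ?_) (fun t ht => simplexReflection_mem_openSimplex ht)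
  simpa [simplexReflection_involutive n t] using simplexReflection_mem_openSimplex ht

lemma setIntegral_openSimplex_comp_simplexReflection {E : Type*} [NormedAddCommGroup E]
    [NormedSpace ℝ E] (n : ℕ) (f : (Fin n → ℝ) → E) :
    ∫ t in openSimplex n, f (simplexReflection n t) = ∫ t in openSimplex n, f t := by
  have := (measurePreserving_simplexReflection n).setIntegral_preimage_emb
    (simplexReflection n).measurableEmbedding f (openSimplex n)
  rwa [preimage_simplexReflection_openSimplex] at this

def itIntFin {n : ℕ} (a : Fin n → ℂ) : ℂ :=
  ∫ t in openSimplex n, ∏ i, ((t i : ℂ) - a i)⁻¹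

lemma itInt_eq_itIntFin (a : List ℂ) : itInt a = itIntFin a.get := rfl

lemma itIntFin_cast {n m : ℕ} (h : n = m) (a : Fin m → ℂ) :
    itIntFin (fun i => a (Fin.cast h i)) = itIntFin a := by
  subst h
  rfl

lemma prod_inv_sub_simplexReflection {n : ℕ} (a : Fin n → ℂ) (t : Fin n → ℝ) :
    ∏ i, ((simplexReflection n t i : ℂ) - a i)⁻¹
      = (-1) ^ n * ∏ i, ((t i : ℂ) - (1 - a i.rev))⁻¹ := by
  have hfactor : ∀ i, ((simplexReflection n t i : ℂ) - a i)⁻¹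
      = (-1)⁻¹ * ((t i.rev : ℂ) - (1 - a i))⁻¹ := by
    intro i
    rw [← mul_inv, simplexReflection_apply]
    push_cast
    ring_nf
  rw [Finset.prod_congr rfl fun i _ => hfactor i, Finset.prod_mul_distrib, Finset.prod_const,
    Finset.card_univ, Fintype.card_fin, inv_neg_one]
  congr 1
  simpa using Equiv.prod_comp Fin.revPerm fun i => ((t i : ℂ) - (1 - a i.rev))⁻¹

lemma itIntFin_eq_neg_one_pow_mul_itIntFin_rev {n : ℕ} (a : Fin n → ℂ) :
    itIntFin a = (-1) ^ n * itIntFin fun i => 1 - a i.rev := by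
  rw [itIntFin, itIntFin, ← integral_const_mul,
    ← setIntegral_openSimplex_comp_simplexReflection]
  simp_rw [prod_inv_sub_simplexReflection]

lemma itInt_eq_neg_one_pow_mul_itInt_reverse (a : List ℂ) :
    itInt a = (-1) ^ a.length * itInt (a.reverse.map fun x => 1 - x) := by
  rw [itInt_eq_itIntFin, itInt_eq_itIntFin, itIntFin_eq_neg_one_pow_mul_itIntFin_rev,
    ← itIntFin_cast (by simp : (a.reverse.map fun x => 1 - x).length = a.length)]
  congr 2
  funext i
  simp only [List.get_eq_getElem, List.getElem_map, List.getElem_reverse, Fin.val_rev,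
    Fin.val_cast]
  congr 2
  omega

lemma one_sub_ev2 (c : Fin 2) : 1 - ev2 c = ev2 (flip2 c) := by
  fin_cases c <;> simp [ev2, flip2]

theorem duality_general (l : List (Fin 2)) :
    itInt (l.map ev2) = (-1) ^ l.length * itInt ((l.reverse.map flip2).map ev2) := by
  have hflip : (l.reverse.map flip2).map ev2 = (l.map ev2).reverse.map fun x => 1 - x := by
    simp [List.map_reverse, one_sub_ev2]
  rw [hflip, itInt_eq_neg_one_pow_mul_itInt_reverse, List.length_map]

/-- Duality: `L(w) = L(τ(w))`, i.e. `L(w) = (-1)^m L(reversed, flipped w)`. -/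
theorem duality (l : List (Fin 2)) (h : l ≠ []) (hhead : l.head h = 1)
    (hlast : l.getLast h = 0) :
    itInt (l.map ev2) = (-1) ^ l.length * itInt ((l.reverse.map flip2).map ev2) :=
  duality_general l

end
end

section
/- Fix s ≥ 1. With A_n = (e_1e_0)^n, B_n = (e_1e_0)^n e_1, Ā_n = (e_0e_1)^n, B̄_n = (e_0e_1)^n e_0, and F_{ee}, F_{oe}, F_{eo}, F_{oo} as defined below, for all m,n ≥ 0 the identity ∂_{z,0} F_{ee}(m,n) = F_{oe}(m−1,n) − Δ(A_s B̄_{m+n}) holds in ℚ⟨e_0,e_1,e_z⟩, where Δ(w) = w − τ(w), τ is the anti-automorphism with τ(e_0) = −e_1, τ(e_1) = −e_0, and F_{oe}(−1,n) := 0. -/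
/-!
On a word, `∂_{z,0}` only sees the adjacent pairs `{e_z, e_0}` of the padded word
`e_0 a_1 ⋯ a_n e_1`. Hence it vanishes on words without `e_z`, and `∂(u v) = u ∂(v)`
whenever `u` has no `e_z` and `v` does not start with `e_z`, so each word of `F_{ee}(m,n)`
can be differentiated locally around its letters `e_z`. The pair formed by the last `e_0`
of `A_m` (the padding `e_0` when `m = 0`) and the following `e_z` turns each word
`A_m e_z v` into `B_{m-1} e_z v - A_m v`, and the first parts add up to the `B_{m-1}`-terms
of `F_{oe}(m-1,n)`. Since `s ≥ 1`, `A_s` begins with `e_1` and ends with `e_0`; the remaining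
terms then cancel in pairs, except those giving the rest of `F_{oe}(m-1,n)` and
`-Δ(A_s B̄_{m+n}) = -A_s B̄_{m+n} - B_{m+n} A_s`.
-/

open scoped BigOperators
open MeasureTheory Filter

noncomputable section

lemma Aw_add (a b : ℕ) : Aw (a + b) = Aw a ++ Aw b := by
  induction a with
  | zero => simp [Aw]
  | succ a ih => rw [Nat.add_right_comm, Aw, ih]; rfl

lemma Bbar_eq_cons (k : ℕ) : Bbar k = 0 :: Aw k := by
  induction k with
  | zero => rfl
  | succ k ih => exact congrArg (fun l => (0 : Ltr) :: 1 :: l) ih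

lemma Bw_eq_cons (k : ℕ) : Bw k = 1 :: Abar k := by
  induction k with
  | zero => rfl
  | succ k ih => exact congrArg (fun l => (1 : Ltr) :: 0 :: l) ih

lemma Aw_succ_eq_Bw_append (k : ℕ) : Aw (k + 1) = Bw k ++ [0] := by
  rw [Aw_add, Bw, List.append_assoc]; rfl

lemma Abar_succ_eq_cons_Bw (k : ℕ) : Abar (k + 1) = 0 :: Bw k := by
  rw [Bw_eq_cons]; rfl

lemma two_notMem_Aw (k : ℕ) : (2 : Ltr) ∉ Aw k := by
  induction k with
  | zero => simp [Aw]
  | succ k ih => simp [Aw, ih]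

lemma two_notMem_Abar (k : ℕ) : (2 : Ltr) ∉ Abar k := by
  induction k with
  | zero => simp [Abar]
  | succ k ih => simp [Abar, ih]

lemma two_notMem_Bw (k : ℕ) : (2 : Ltr) ∉ Bw k := by
  simp [Bw, two_notMem_Aw]

lemma Bbar_add (m n : ℕ) : Bbar (m + n) = Bbar m ++ Aw n := by
  rw [Bbar_eq_cons, Bbar_eq_cons, Aw_add, List.cons_append]

lemma reverse_map_flipL_Aw (k : ℕ) : (Aw k).reverse.map flipL = Aw k := by
  induction k with
  | zero => rfl
  | succ k ih =>
    conv_rhs => rw [Aw_add k 1]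
    rw [Aw, List.reverse_cons, List.reverse_cons, List.map_append, List.map_append, ih,
      List.append_assoc]
    rfl

lemma reverse_map_flipL_Bbar (k : ℕ) : (Bbar k).reverse.map flipL = Bw k := by
  rw [Bbar_eq_cons, List.reverse_cons, List.map_append, reverse_map_flipL_Aw]; rfl

lemma length_Aw (k : ℕ) : (Aw k).length = 2 * k := by
  induction k with
  | zero => rfl
  | succ k ih => simp [Aw, ih]; ring

lemma pad_cons_one (a : Ltr) (l : List Ltr) : pad (a :: l) 1 = a := rfl

lemma pad_append_one_ne_two {u v : List Ltr} (hu : (2 : Ltr) ∉ u) (hv : pad v 1 ≠ 2) :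
    pad (u ++ v) 1 ≠ 2 := by
  cases u with
  | nil => exact hv
  | cons a u => exact fun h => hu (h ▸ List.mem_cons_self)

lemma pad_one_ne_two {l : List Ltr} (hl : (2 : Ltr) ∉ l) : pad l 1 ≠ 2 := by
  simpa using pad_append_one_ne_two hl (v := []) (by decide)

lemma pad_Aw_one (k : ℕ) : pad (Aw k) 1 = 1 := by
  cases k <;> rfl

lemma pad_Bw_append_one (k : ℕ) (l : List Ltr) : pad (Bw k ++ l) 1 = 1 := by
  rw [Bw_eq_cons]; rfl

lemma wd_append (u v : List Ltr) : wd (u ++ v) = wd u * wd v := by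
  simp [wd]

lemma wd_nil : wd [] = 1 := rfl

lemma wd_cons (a : Ltr) (l : List Ltr) :
    wd (a :: l) = MonoidAlgebra.of ℚ (FreeMonoid Ltr) (FreeMonoid.of a) * wd l :=
  wd_append [a] l

lemma del_wd (b : Ltr) (l : List Ltr) : del b (wd l) = delWord b l := by
  simp only [del, wd, MonoidAlgebra.of_apply]
  erw [Finsupp.lift_apply, Finsupp.sum_single_index] <;> simp

lemma tau_wd (l : List Ltr) :
    tau (wd l) = ((-1 : ℚ) ^ l.length) • wd (l.reverse.map flipL) := by
  simp only [tau, wd, MonoidAlgebra.of_apply]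
  erw [Finsupp.lift_apply, Finsupp.sum_single_index] <;> simp

lemma Del_wd_Aw_append_Bbar (s k : ℕ) :
    Del (wd (Aw s ++ Bbar k)) = wd (Aw s ++ Bbar k) + wd (Bw k ++ Aw s) := by
  have hlen : (Aw s ++ Bbar k).length = 2 * (s + k) + 1 := by
    simp [Bbar_eq_cons, length_Aw]; ring
  rw [Del, tau_wd, hlen, Odd.neg_one_pow ⟨s + k, rfl⟩, List.reverse_append, List.map_append,
    reverse_map_flipL_Aw, reverse_map_flipL_Bbar, neg_one_smul, sub_neg_eq_add]

lemma dl_eq_zero_of_ne_two {x y : Ltr} (hx : x ≠ 2) (hy : y ≠ 2) (b : Ltr) :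
    dl x y 2 b = 0 := by
  rw [dl, if_neg]
  rintro (⟨h, -⟩ | ⟨-, h⟩)
  exacts [hx h, hy h]

lemma delWord_nil (b : Ltr) : delWord b [] = 0 := rfl

theorem delWord_cons (b a : Ltr) {l : List Ltr} (hl : l ≠ []) :
    delWord b (a :: l) = (dl a (pad l 1) 2 b - dl 0 a 2 b) • wd l + wd [a] * delWord b l
      - (dl a (pad l 1) 2 b - dl 0 (pad l 1) 2 b) • wd (a :: l.tail) := by
  obtain ⟨c, l, rfl⟩ := List.exists_cons_of_ne_nil hl
  simp only [delWord, List.length_cons, Finset.sum_range_succ', Finset.mul_sum, mul_add]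
  have htail : ∀ i ∈ Finset.range l.length,
      (dl (pad (a :: c :: l) (i + 1 + 1 + 1)) (pad (a :: c :: l) (i + 1 + 1 + 2)) 2 b
        - dl (pad (a :: c :: l) (i + 1 + 1)) (pad (a :: c :: l) (i + 1 + 1 + 1)) 2 b)
        • wd ((a :: c :: l).eraseIdx (i + 1 + 1))
      = wd [a] * ((dl (pad (c :: l) (i + 1 + 1)) (pad (c :: l) (i + 1 + 2)) 2 b
        - dl (pad (c :: l) (i + 1)) (pad (c :: l) (i + 1 + 1)) 2 b)
        • wd ((c :: l).eraseIdx (i + 1))) := by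
    intro i _
    rw [mul_smul_comm, ← wd_append]
    rfl
  rw [Finset.sum_congr rfl htail, mul_smul_comm, ← wd_append]
  change _ + (dl c (pad l 1) 2 b - dl a c 2 b) • wd (a :: l)
      + (dl a c 2 b - dl 0 a 2 b) • wd (c :: l)
    = (dl a c 2 b - dl 0 a 2 b) • wd (c :: l)
      + (_ + (dl c (pad l 1) 2 b - dl 0 c 2 b) • wd (a :: l))
      - (dl a c 2 b - dl 0 c 2 b) • wd (a :: l)
  module

lemma delWord_singleton (b a : Ltr) : delWord b [a] = (dl a 1 2 b - dl 0 a 2 b) • wd [] := by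
  simp [delWord]
  rfl

theorem delWord_append_of_two_notMem (b : Ltr) {u v : List Ltr} (hu : (2 : Ltr) ∉ u)
    (hv : pad v 1 ≠ 2) : delWord b (u ++ v) = wd u * delWord b v := by
  induction u with
  | nil => rw [List.nil_append, wd_nil, one_mul]
  | cons a u ih =>
    have ha : a ≠ 2 := fun h => hu (h ▸ List.mem_cons_self)
    have hu' : (2 : Ltr) ∉ u := fun h => hu (List.mem_cons_of_mem a h)
    rw [List.cons_append, wd_cons, mul_assoc, ← ih hu']
    by_cases huv : u ++ v = []
    · obtain ⟨rfl, rfl⟩ := List.append_eq_nil_iff.mp huv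
      rw [List.append_nil, delWord_nil, delWord_singleton, dl_eq_zero_of_ne_two ha (by decide),
        dl_eq_zero_of_ne_two (by decide) ha, sub_self, zero_smul, mul_zero]
    · have hy := pad_append_one_ne_two hu' hv
      rw [delWord_cons b a huv, dl_eq_zero_of_ne_two ha hy, dl_eq_zero_of_ne_two (by decide) ha,
        dl_eq_zero_of_ne_two (by decide) hy]
      simp only [sub_self, zero_smul, zero_add, sub_zero]
      rfl

theorem delWord_of_two_notMem (b : Ltr) {l : List Ltr} (hl : (2 : Ltr) ∉ l) :
    delWord b l = 0 := by
  simpa [delWord_nil] using delWord_append_of_two_notMem b hl (v := []) (by decide)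

lemma delWord_zero_zero_two_cons (w : List Ltr) :
    delWord 0 (0 :: 2 :: w) = wd (2 :: w) + wd [0] * delWord 0 (2 :: w) := by
  rw [delWord_cons 0 0 (List.cons_ne_nil 2 w)]
  change (dl 0 2 2 0 - dl 0 0 2 0) • _ + _ - (dl 0 2 2 0 - dl 0 2 2 0) • _ = _
  simp [dl]

lemma delWord_zero_one_two_cons (w : List Ltr) :
    delWord 0 (1 :: 2 :: w) = wd (1 :: w) + wd [1] * delWord 0 (2 :: w) := by
  rw [delWord_cons 0 1 (List.cons_ne_nil 2 w)]
  change (dl 1 2 2 0 - dl 0 1 2 0) • _ + _ - (dl 1 2 2 0 - dl 0 2 2 0) • _ = _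
  simp [dl, add_comm]

lemma delWord_zero_two_cons {w : List Ltr} (hw : pad w 1 = 1) :
    delWord 0 (2 :: w) = -wd w + wd [2] * delWord 0 w := by
  rcases w with _ | ⟨c, w⟩
  · rw [delWord_singleton, delWord_nil]
    simp [dl]
  · rw [delWord_cons 0 2 (List.cons_ne_nil c w), hw]
    simp [dl]

lemma delWord_zero_two_zero_cons {w : List Ltr} (hw : pad w 1 ≠ 2) :
    delWord 0 (2 :: 0 :: w) = -wd (2 :: w) + wd [2, 0] * delWord 0 w := by
  have h0 : delWord 0 (0 :: w) = wd [0] * delWord 0 w :=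
    delWord_append_of_two_notMem 0 (u := [0]) (by decide) hw
  rw [delWord_cons 0 2 (List.cons_ne_nil 0 w), h0]
  change (dl 2 0 2 0 - dl 0 2 2 0) • _ + _ - (dl 2 0 2 0 - dl 0 0 2 0) • _ = _
  simp [dl, ← mul_assoc, ← wd_append]
  abel

lemma delWord_zero_two_cons_of_two_notMem {v : List Ltr} (hv : (2 : Ltr) ∉ v)
    (h1 : pad v 1 = 1) : delWord 0 (2 :: v) = -wd v := by
  rw [delWord_zero_two_cons h1, delWord_of_two_notMem 0 hv, mul_zero, add_zero]

lemma delWord_zero_two_Bbar (k : ℕ) : delWord 0 (2 :: Bbar k) = -wd (2 :: Aw k) := by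
  rw [Bbar_eq_cons, delWord_zero_two_zero_cons (pad_one_ne_two (two_notMem_Aw k)),
    delWord_of_two_notMem 0 (two_notMem_Aw k), mul_zero, add_zero]

lemma delWord_zero_Bw_append_two {v : List Ltr} (hv : (2 : Ltr) ∉ v) (h1 : pad v 1 = 1)
    (k : ℕ) : delWord 0 (Bw k ++ 2 :: v) = 0 := by
  rw [Bw, List.append_assoc, List.singleton_append,
    delWord_append_of_two_notMem 0 (two_notMem_Aw k) (by rw [pad_cons_one]; decide),
    delWord_zero_one_two_cons, delWord_zero_two_cons_of_two_notMem hv h1]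
  simp only [wd_cons, wd_nil, mul_one]
  noncomm_ring

/-- `B_{m-1} e_z`, and `0` for `m = 0`: the prefix of `F_{oe}(m-1, ·)` with its convention
`F_{oe}(-1, n) = 0`. -/
def predBez : ℕ → Alg
  | 0 => 0
  | m + 1 => wd (Bw m ++ ezw)

lemma delWord_zero_Aw_append_two (m : ℕ) (v : List Ltr) :
    delWord 0 (Aw m ++ 2 :: v) = predBez m * wd v + wd (Aw m) * delWord 0 (2 :: v) := by
  cases m with
  | zero => simp [predBez, Aw, wd_nil]
  | succ m =>
    rw [Aw_succ_eq_Bw_append, List.append_assoc, List.singleton_append,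
      delWord_append_of_two_notMem 0 (two_notMem_Bw m) (by rw [pad_cons_one]; decide),
      delWord_zero_zero_two_cons, predBez, ezw]
    simp only [wd_append, wd_cons, wd_nil, mul_one]
    noncomm_ring

lemma delWord_zero_Bbar_ezw_Aw {u : List Ltr} (hu : (2 : Ltr) ∉ u) (m n : ℕ) :
    delWord 0 (u ++ Bbar m ++ ezw ++ Aw n)
      = wd (u ++ Abar m ++ ezw ++ Aw n) - wd (u ++ Bbar (m + n)) := by
  have hsplit : u ++ Bbar m ++ ezw ++ Aw n = (u ++ Abar m) ++ 0 :: 2 :: Aw n := by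
    simp [Bbar, ezw]
  have hu' : (2 : Ltr) ∉ u ++ Abar m := by simp [hu, two_notMem_Abar]
  rw [hsplit, delWord_append_of_two_notMem 0 hu' (by rw [pad_cons_one]; decide),
    delWord_zero_zero_two_cons, delWord_zero_two_cons_of_two_notMem (two_notMem_Aw n)
      (pad_Aw_one n), Bbar_add, Bbar, ezw]
  simp only [wd_append, wd_cons, wd_nil, mul_one]
  noncomm_ring

lemma delWord_zero_Aw_ezw_Aw_ezw_Aw (m s n : ℕ) :
    delWord 0 (Aw m ++ ezw ++ Aw (s + 1) ++ ezw ++ Aw n)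
      = predBez m * wd (Aw (s + 1) ++ ezw ++ Aw n) - wd (Aw (s + 1 + m) ++ ezw ++ Aw n)
        + wd (Aw m ++ ezw ++ Bw s ++ ezw ++ Aw n) - wd (Aw m ++ ezw ++ Aw (s + 1 + n)) := by
  have hsplit : Aw m ++ ezw ++ Aw (s + 1) ++ ezw ++ Aw n
      = Aw m ++ 2 :: (Bw s ++ 0 :: 2 :: Aw n) := by
    simp [ezw, Aw_succ_eq_Bw_append]
  rw [hsplit, delWord_zero_Aw_append_two, delWord_zero_two_cons (pad_Bw_append_one _ _),
    delWord_append_of_two_notMem 0 (two_notMem_Bw s) (by rw [pad_cons_one]; decide),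
    delWord_zero_zero_two_cons, delWord_zero_two_cons_of_two_notMem (two_notMem_Aw n)
      (pad_Aw_one n), Nat.add_comm (s + 1) m, Aw_add m, Aw_add (s + 1) n,
    Aw_succ_eq_Bw_append s, ezw]
  simp only [wd_append, wd_cons, wd_nil, mul_one, List.append_assoc]
  noncomm_ring

lemma delWord_zero_Aw_ezw_Abar_ezw_Aw (m s n : ℕ) :
    delWord 0 (Aw m ++ ezw ++ Abar (s + 1) ++ ezw ++ Aw n)
      = predBez m * wd (Abar (s + 1) ++ ezw ++ Aw n)
        - wd (Aw m ++ ezw ++ Bw s ++ ezw ++ Aw n) := by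
  have hsplit : Aw m ++ ezw ++ Abar (s + 1) ++ ezw ++ Aw n
      = Aw m ++ 2 :: 0 :: (Bw s ++ 2 :: Aw n) := by
    simp [ezw, Abar_succ_eq_cons_Bw]
  rw [hsplit, delWord_zero_Aw_append_two,
    delWord_zero_two_zero_cons (by rw [pad_Bw_append_one]; decide),
    delWord_zero_Bw_append_two (two_notMem_Aw n) (pad_Aw_one n), Abar_succ_eq_cons_Bw, ezw]
  simp only [wd_append, wd_cons, wd_nil, mul_one, List.append_assoc]
  noncomm_ring

lemma delWord_zero_Aw_ezw_Bw {w : List Ltr} (hw : (2 : Ltr) ∉ w) (m n : ℕ) :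
    delWord 0 (Aw m ++ ezw ++ Bw n ++ w) = predBez m * wd (Bw n ++ w) - wd (Bw (m + n) ++ w) := by
  have hsplit : Aw m ++ ezw ++ Bw n ++ w = Aw m ++ 2 :: (Bw n ++ w) := by simp [ezw]
  rw [hsplit, delWord_zero_Aw_append_two, delWord_zero_two_cons_of_two_notMem
      (by simp [hw, two_notMem_Bw]) (pad_Bw_append_one _ _), Bw, Bw, Aw_add]
  simp only [wd_append, wd_cons, wd_nil, mul_one, List.append_assoc]
  noncomm_ring

lemma delWord_zero_Aw_ezw_Bbar (m k : ℕ) :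
    delWord 0 (Aw m ++ ezw ++ Bbar k) = predBez m * wd (Bbar k) - wd (Aw m ++ ezw ++ Aw k) := by
  rw [ezw, List.append_assoc, List.singleton_append, delWord_zero_Aw_append_two,
    delWord_zero_two_Bbar]
  simp only [wd_append, wd_cons, wd_nil, mul_one, List.append_assoc]
  noncomm_ring

lemma delWord_zero_Bw_ezw_Aw (k n : ℕ) : delWord 0 (Bw k ++ ezw ++ Aw n) = 0 := by
  rw [ezw, List.append_assoc, List.singleton_append,
    delWord_zero_Bw_append_two (two_notMem_Aw n) (pad_Aw_one n)]

lemma Foe_natCast_sub_one (s m n : ℕ) :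
    Foe s ((m : ℤ) - 1) n
      = wd (Aw s ++ Abar m ++ ezw ++ Aw n)
        + predBez m * (wd (Aw s ++ ezw ++ Aw n) + wd (Abar s ++ ezw ++ Aw n)
          + wd (Bw n ++ Aw s) - wd (Bbar (s + n)))
        - wd (Aw (s + m) ++ ezw ++ Aw n) := by
  cases m with
  | zero => simp [Foe, predBez, Abar]
  | succ m =>
    have hm : ((((m + 1 : ℕ) : ℤ) - 1).toNat) = m := by omega
    rw [Foe, if_neg (by omega), hm, Int.toNat_natCast, predBez]
    simp only [mul_add, mul_sub, ← wd_append, List.append_assoc, ← add_assoc]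
    abel

/-- `∂_{z,0} F_{ee}(m,n) = F_{oe}(m-1,n) - Δ(A_s B̄_{m+n})`. -/
theorem del0_Fee (s : ℕ) (hs : 1 ≤ s) (m n : ℤ) (hm : 0 ≤ m) (hn : 0 ≤ n) :
    del 0 (Fee s m n) = Foe s (m - 1) n - Del (wd (Aw s ++ Bbar (m + n).toNat)) := by
  lift m to ℕ using hm
  lift n to ℕ using hn
  obtain ⟨s, rfl⟩ := Nat.exists_eq_add_of_le' hs
  have hsum : ((m : ℤ) + n).toNat = m + n := by omega
  rw [Fee, if_neg (by omega), Foe_natCast_sub_one, hsum, Del_wd_Aw_append_Bbar]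
  simp only [Int.toNat_natCast, map_add, map_sub, del_wd]
  rw [delWord_zero_Bbar_ezw_Aw (two_notMem_Aw _), delWord_zero_Aw_ezw_Aw_ezw_Aw,
    delWord_zero_Aw_ezw_Abar_ezw_Aw, delWord_zero_Aw_ezw_Bw (two_notMem_Aw _),
    delWord_zero_Bw_ezw_Aw, delWord_zero_Aw_ezw_Bbar]
  simp only [mul_add, mul_sub]
  abel
end
end
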